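/- Let F₁, F₂ be analytic in a neighborhood of 1. For 0 ≤ r ≤ l let a_{i,[2]}^{l,r} be the Taylor coefficients at 1 of x^l F₂(x)^{l-r}, and set B_{l,r}(x) = (x^l F₂(x)^{l-r} − ∑_{i=0}^{r-1} a_{i,[2]}^{l,r}(x-1)^i)/(x-1)^r. Let 𝔉₁(z) = 1/z + 1 + (1+z)F₁(1+z) and 𝔉₂(z) = 1/z + 1 + (1+z)F₂(1+z). Then k ∑_{q=0}^{k-1} ∑_{r=0}^{l} C(l,r) C(k-1,q) (1/(q+1)!) ∂_x^q ( x^k F₁(x)^{k-1-q} B'_{l,r}(x) ) |_{x=1} = (1/(2πi)²) ∮_{|z|=ε} ∮_{|w|=2ε} 𝔉₁(z)^k 𝔉₂(w)^l (z-w)^{-2} dz dw, where both contours are counterclockwise and ε ≪ 1. -/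

import Mathlib

open scoped BigOperators Real

namespace CovarianceAux

open Complex Metric Finset

lemma two_pi_I_ne : (2 * (π : ℂ) * Complex.I) ≠ 0 := by
  simp [Real.pi_ne_zero, Complex.I_ne_zero, Complex.ofReal_ne_zero]

lemma circleIntegral_add' {f g : ℂ → ℂ} {c : ℂ} {R : ℝ}
    (hf : CircleIntegrable f c R) (hg : CircleIntegrable g c R) :
    (∮ z in C(c, R), (f z + g z)) = (∮ z in C(c, R), f z) + ∮ z in C(c, R), g z := by
  simp only [circleIntegral, smul_add]
  exact intervalIntegral.integral_add hf.out hg.out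

lemma circleIntegrable_sum {ι : Type*} (s : Finset ι) {f : ι → ℂ → ℂ} {c : ℂ} {R : ℝ}
    (h : ∀ i ∈ s, CircleIntegrable (f i) c R) :
    CircleIntegrable (fun z => ∑ i ∈ s, f i z) c R := by
  classical
  induction s using Finset.induction_on with
  | empty => simpa using circleIntegrable_const (0 : ℂ) c R
  | @insert a s ha ih =>
      simp only [Finset.sum_insert ha]
      exact (h a (Finset.mem_insert_self a s)).add
        (ih fun i hi => h i (Finset.mem_insert_of_mem hi))

lemma circleIntegral_sum {ι : Type*} (s : Finset ι) {f : ι → ℂ → ℂ} {c : ℂ} {R : ℝ}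
    (h : ∀ i ∈ s, CircleIntegrable (f i) c R) :
    (∮ z in C(c, R), ∑ i ∈ s, f i z) = ∑ i ∈ s, ∮ z in C(c, R), f i z := by
  classical
  induction s using Finset.induction_on with
  | empty => simp [circleIntegral]
  | @insert a s ha ih =>
      simp only [Finset.sum_insert ha]
      rw [circleIntegral_add' (h a (Finset.mem_insert_self a s))
        (circleIntegrable_sum s fun i hi => h i (Finset.mem_insert_of_mem hi)),
        ih fun i hi => h i (Finset.mem_insert_of_mem hi)]

lemma sphere_ne_zero {ρ : ℝ} (hρ : 0 < ρ) {w : ℂ} (hw : w ∈ sphere (0 : ℂ) ρ) : w ≠ 0 := by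
  rw [mem_sphere_zero_iff_norm] at hw
  intro h; rw [h] at hw; simp at hw; exact hρ.ne' hw.symm

lemma sphere_ne {ρ : ℝ} {z : ℂ} (hz : ‖z‖ ≠ ρ) {w : ℂ} (hw : w ∈ sphere (0 : ℂ) ρ) :
    w ≠ z := by
  rw [mem_sphere_zero_iff_norm] at hw
  rintro rfl; exact hz hw

lemma contOn_inv_pow {ρ : ℝ} (hρ : 0 < ρ) (n : ℕ) :
    ContinuousOn (fun w : ℂ => (w ^ n)⁻¹) (sphere (0 : ℂ) ρ) :=
  ((continuous_pow n).continuousOn).inv₀ fun _ hw =>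
    pow_ne_zero _ (sphere_ne_zero hρ hw)

lemma contOn_inv_sub_pow {ρ : ℝ} {z : ℂ} (hz : ‖z‖ ≠ ρ) (m : ℕ) :
    ContinuousOn (fun w : ℂ => ((w - z) ^ m)⁻¹) (sphere (0 : ℂ) ρ) :=
  (((continuous_id.sub continuous_const).pow m).continuousOn).inv₀ fun _ hw =>
    pow_ne_zero _ (sub_ne_zero.mpr (sphere_ne hz hw))

lemma ci_aux {ρ : ℝ} (hρ : 0 < ρ) {z : ℂ} (hz : ‖z‖ ≠ ρ) (n m : ℕ) :
    CircleIntegrable (fun w : ℂ => (w ^ n)⁻¹ * ((w - z) ^ m)⁻¹) 0 ρ :=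
  ContinuousOn.circleIntegrable hρ.le ((contOn_inv_pow hρ n).mul (contOn_inv_sub_pow hz m))

lemma integral_inv_pow_mul_sub_inv {ρ : ℝ} {z : ℂ} (hz0 : z ≠ 0) (hz : ‖z‖ < ρ) :
    ∀ n : ℕ, (∮ w in C(0, ρ), (w ^ (n + 1))⁻¹ * (w - z)⁻¹) = 0 := by
  have hρ : 0 < ρ := lt_of_le_of_lt (norm_nonneg z) hz
  have hzρ : ‖z‖ ≠ ρ := ne_of_lt hz
  have hmem : z ∈ ball (0 : ℂ) ρ := by simpa [mem_ball, dist_eq_norm] using hz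
  have h0mem : (0 : ℂ) ∈ ball (0 : ℂ) ρ := mem_ball_self hρ
  intro n
  induction n with
  | zero =>
      have hcongr : Set.EqOn (fun w : ℂ => (w ^ (0 + 1))⁻¹ * (w - z)⁻¹)
          (fun w : ℂ => z⁻¹ * ((w - z)⁻¹ - (w - 0)⁻¹)) (sphere (0 : ℂ) ρ) := by
        intro w hw
        have hw0 : w ≠ 0 := sphere_ne_zero hρ hw
        have hwz : w - z ≠ 0 := sub_ne_zero.mpr (sphere_ne hzρ hw)
        dsimp only
        rw [sub_zero, inv_sub_inv hwz hw0]
        field_simp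
        ring
      rw [circleIntegral.integral_congr hρ.le hcongr,
        circleIntegral.integral_const_mul]
      have h1 : CircleIntegrable (fun w : ℂ => (w - z)⁻¹) 0 ρ := by
        simpa using ci_aux hρ hzρ 0 1
      have h2 : CircleIntegrable (fun w : ℂ => (w - 0)⁻¹) 0 ρ := by
        have := ci_aux hρ (by simpa using hρ.ne : ‖(0 : ℂ)‖ ≠ ρ) 0 1
        simpa using this
      rw [circleIntegral.integral_sub h1 h2,
        circleIntegral.integral_sub_inv_of_mem_ball hmem,
        circleIntegral.integral_sub_inv_of_mem_ball h0mem]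
      simp
  | succ n ih =>
      have hcongr : Set.EqOn (fun w : ℂ => (w ^ (n + 1 + 1))⁻¹ * (w - z)⁻¹)
          (fun w : ℂ => z⁻¹ * ((w ^ (n + 1))⁻¹ * (w - z)⁻¹ - (w ^ (n + 1 + 1))⁻¹))
          (sphere (0 : ℂ) ρ) := by
        intro w hw
        have hw0 : w ≠ 0 := sphere_ne_zero hρ hw
        have hwz : w - z ≠ 0 := sub_ne_zero.mpr (sphere_ne hzρ hw)
        have key : w⁻¹ * (w - z)⁻¹ = z⁻¹ * ((w - z)⁻¹ - w⁻¹) := by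
          rw [inv_sub_inv hwz hw0]
          field_simp
          ring
        dsimp only
        rw [pow_succ (w) (n + 1), mul_inv]
        linear_combination ((w ^ (n + 1))⁻¹) * key
      rw [circleIntegral.integral_congr hρ.le hcongr, circleIntegral.integral_const_mul]
      have h1 : CircleIntegrable (fun w : ℂ => (w ^ (n + 1))⁻¹ * (w - z)⁻¹) 0 ρ := by
        simpa using ci_aux hρ hzρ (n + 1) 1
      have h2 : CircleIntegrable (fun w : ℂ => (w ^ (n + 1 + 1))⁻¹) 0 ρ :=
        ContinuousOn.circleIntegrable hρ.le (contOn_inv_pow hρ (n + 1 + 1))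
      have h3 : (∮ w in C(0, ρ), (w ^ (n + 1 + 1))⁻¹) = 0 := by
        have hcg : Set.EqOn (fun w : ℂ => (w ^ (n + 1 + 1))⁻¹)
            (fun w : ℂ => (w - 0) ^ (-(n : ℤ) - 2)) (sphere (0 : ℂ) ρ) := by
          intro w hw
          dsimp only
          rw [sub_zero, show (-(n : ℤ) - 2) = -((n + 1 + 1 : ℕ) : ℤ) by push_cast; ring,
            zpow_neg, zpow_natCast]
        rw [circleIntegral.integral_congr hρ.le hcg]
        exact circleIntegral.integral_sub_zpow_of_ne (by omega) _ _ _
      rw [circleIntegral.integral_sub h1 h2, ih, h3]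
      simp

lemma integral_inv_pow_mul_sub_sq_inv {ρ : ℝ} {z : ℂ} (hz0 : z ≠ 0) (hz : ‖z‖ < ρ) :
    ∀ n : ℕ, (∮ w in C(0, ρ), (w ^ n)⁻¹ * ((w - z) ^ 2)⁻¹) = 0 := by
  have hρ : 0 < ρ := lt_of_le_of_lt (norm_nonneg z) hz
  have hzρ : ‖z‖ ≠ ρ := ne_of_lt hz
  intro n
  induction n with
  | zero =>
      have hcongr : Set.EqOn (fun w : ℂ => (w ^ 0)⁻¹ * ((w - z) ^ 2)⁻¹)
          (fun w : ℂ => (w - z) ^ (-2 : ℤ)) (sphere (0 : ℂ) ρ) := by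
        intro w _
        dsimp only
        rw [pow_zero, inv_one, one_mul,
          show (-2 : ℤ) = -((2 : ℕ) : ℤ) by norm_num, zpow_neg, zpow_natCast]
      rw [circleIntegral.integral_congr hρ.le hcongr,
        circleIntegral.integral_sub_zpow_of_ne (by omega) _ _ _]
  | succ n ih =>
      have hcongr : Set.EqOn (fun w : ℂ => (w ^ (n + 1))⁻¹ * ((w - z) ^ 2)⁻¹)
          (fun w : ℂ => z⁻¹ * ((w ^ n)⁻¹ * ((w - z) ^ 2)⁻¹ - (w ^ (n + 1))⁻¹ * (w - z)⁻¹))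
          (sphere (0 : ℂ) ρ) := by
        intro w hw
        have hw0 : w ≠ 0 := sphere_ne_zero hρ hw
        have hwz : w - z ≠ 0 := sub_ne_zero.mpr (sphere_ne hzρ hw)
        have key : w⁻¹ * (w - z)⁻¹ = z⁻¹ * ((w - z)⁻¹ - w⁻¹) := by
          rw [inv_sub_inv hwz hw0]
          field_simp
          ring
        dsimp only
        rw [pow_succ (w) n, mul_inv, sq (w - z), mul_inv]
        linear_combination ((w ^ n)⁻¹ * (w - z)⁻¹) * key
      have h2 : CircleIntegrable (fun w : ℂ => (w ^ (n + 1))⁻¹ * (w - z)⁻¹) 0 ρ := by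
        simpa using ci_aux hρ hzρ (n + 1) 1
      rw [circleIntegral.integral_congr hρ.le hcongr, circleIntegral.integral_const_mul,
        circleIntegral.integral_sub (ci_aux hρ hzρ n 2) h2, ih,
        integral_inv_pow_mul_sub_inv hz0 hz n]
      simp

lemma cauchy_coeff {r : ℝ} (hr : 0 < r) {h : ℂ → ℂ}
    (hd : DifferentiableOn ℂ h (closedBall (0 : ℂ) r)) (n : ℕ) :
    (∮ z in C(0, r), (z ^ (n + 1))⁻¹ * h z)
      = (2 * (π : ℂ) * Complex.I) * ((n.factorial : ℂ))⁻¹ * iteratedDeriv n h 0 := by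
  lift r to NNReal using hr.le with r' hr'
  have hr0 : (0 : NNReal) < r' := by exact_mod_cast hr
  have hball : HasFPowerSeriesOnBall h (cauchyPowerSeries h 0 r') 0 r' :=
    DifferentiableOn.hasFPowerSeriesOnBall hd hr0
  have key := hball.factorial_smul (1 : ℂ) n
  rw [cauchyPowerSeries_apply] at key
  rw [← iteratedDeriv_eq_iteratedFDeriv] at key
  have hs : (∮ z in C(0, (r' : ℝ)), ((1 : ℂ) / (z - 0)) ^ n • ((z - 0)⁻¹ • h z))
      = ∮ z in C(0, (r' : ℝ)), (z ^ (n + 1))⁻¹ * h z := by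
    apply circleIntegral.integral_congr hr.le
    intro z _
    dsimp only
    rw [smul_eq_mul, smul_eq_mul, sub_zero, one_div, inv_pow, pow_succ, mul_inv, mul_assoc]
  rw [hs, nsmul_eq_mul, smul_eq_mul] at key
  have hfac : ((n.factorial : ℂ)) ≠ 0 := by
    exact_mod_cast (Nat.factorial_pos n).ne'
  rw [← key]
  field_simp [hfac, Real.pi_ne_zero, Complex.I_ne_zero]

lemma cauchy_zero {r : ℝ} (hr : 0 < r) {h : ℂ → ℂ}
    (hd : DifferentiableOn ℂ h (closedBall (0 : ℂ) r)) :
    (∮ z in C(0, r), h z) = 0 := by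
  apply Complex.circleIntegral_eq_zero_of_differentiable_on_off_countable hr.le
    Set.countable_empty hd.continuousOn
  intro z hz
  apply hd.differentiableAt
  exact mem_nhds_iff.mpr ⟨ball (0 : ℂ) r, ball_subset_closedBall, isOpen_ball, hz.1⟩

lemma binom_expand {F : ℂ → ℂ} {m : ℕ} {z : ℂ} (hz : z ≠ 0) :
    (z⁻¹ + 1 + (1 + z) * F (1 + z)) ^ m
      = ∑ j ∈ Finset.range (m + 1),
          (m.choose j : ℂ) * ((z ^ j)⁻¹ * ((1 + z) ^ m * F (1 + z) ^ (m - j))) := by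
  have h1 : z⁻¹ + 1 + (1 + z) * F (1 + z) = z⁻¹ * ((1 + z) * (1 + z * F (1 + z))) := by
    field_simp
  have h2 : ∀ c G : ℂ, (z⁻¹ * (c * (1 + z * G))) ^ m
      = ∑ j ∈ Finset.range (m + 1), (m.choose j : ℂ) * ((z ^ j)⁻¹ * (c ^ m * G ^ (m - j))) := by
    intro c G
    rw [mul_pow, mul_pow, add_pow, Finset.mul_sum, Finset.mul_sum]
    apply Finset.sum_congr rfl
    intro j hj
    have hjm : j ≤ m := Nat.lt_succ_iff.mp (Finset.mem_range.mp hj)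
    have e1 : (z * G) ^ (m - j) = z ^ (m - j) * G ^ (m - j) := mul_pow _ _ _
    have e2 : (z⁻¹) ^ m * z ^ (m - j) = (z ^ j)⁻¹ := by
      rw [pow_sub₀ z hz hjm, inv_pow]
      field_simp
    calc (z⁻¹) ^ m * (c ^ m * (1 ^ j * (z * G) ^ (m - j) * (m.choose j : ℂ)))
        = (m.choose j : ℂ) * (((z⁻¹) ^ m * z ^ (m - j)) * (c ^ m * G ^ (m - j))) := by
          rw [e1]; ring
      _ = (m.choose j : ℂ) * ((z ^ j)⁻¹ * (c ^ m * G ^ (m - j))) := by rw [e2]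
  rw [h1, h2]

lemma comb_identity {k q : ℕ} (hk : 1 ≤ k) :
    (k : ℂ) * (((k - 1).choose q : ℂ) * ((Nat.factorial (q + 1) : ℂ))⁻¹)
      = (k.choose (q + 1) : ℂ) * ((Nat.factorial q : ℂ))⁻¹ := by
  have hnat : k * ((k - 1).choose q) = k.choose (q + 1) * (q + 1) := by
    have h := Nat.add_one_mul_choose_eq (k - 1) q
    rw [show k - 1 + 1 = k by omega] at h
    simpa [Nat.succ_eq_add_one] using h
  have hfq : ((Nat.factorial q : ℂ)) ≠ 0 := by
    exact_mod_cast (Nat.factorial_pos q).ne'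
  have hfq1 : ((Nat.factorial (q + 1) : ℂ)) ≠ 0 := by
    exact_mod_cast (Nat.factorial_pos (q + 1)).ne'
  have hc : (k : ℂ) * ((k - 1).choose q : ℂ) = (k.choose (q + 1) : ℂ) * ((q : ℂ) + 1) := by
    exact_mod_cast congrArg (fun n : ℕ => (n : ℂ)) hnat
  have hfact : (Nat.factorial (q + 1) : ℂ) = ((q : ℂ) + 1) * (Nat.factorial q : ℂ) := by
    rw [Nat.factorial_succ]; push_cast; ring
  have hq1 : ((q : ℂ) + 1) ≠ 0 := Nat.cast_add_one_ne_zero q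
  have hu : ((q : ℂ) + 1) * ((q : ℂ) + 1)⁻¹ = 1 := mul_inv_cancel₀ hq1
  rw [hfact, mul_inv]
  linear_combination ((q : ℂ) + 1)⁻¹ * ((Nat.factorial q : ℂ))⁻¹ * hc
    + ((k.choose (q + 1) : ℂ) * ((Nat.factorial q : ℂ))⁻¹) * hu

end CovarianceAux

open CovarianceAux Complex Metric Finset in
/-- Lemma 5.7 (key covariance identity). With `B_{l,r}` the analytic function satisfying
`B_{l,r}(x)(x-1)^r = x^l F₂(x)^{l-r} − (first r Taylor terms)` and
`𝔉ᵢ(z) = 1/z + 1 + (1+z)Fᵢ(1+z)`, one has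
`k ∑_{q<k} ∑_{r≤l} C(l,r) C(k-1,q) (1/(q+1)!) ∂_x^q (x^k F₁(x)^{k-1-q} B'_{l,r}(x)) |_{x=1}
 = (1/(2πi)²) ∮_{|z|=ε} ∮_{|w|=2ε} 𝔉₁(z)^k 𝔉₂(w)^l (z-w)⁻² dz dw`. -/
theorem covariance_double_contour_identity (k l : ℕ) (hk : 1 ≤ k) (hl : 1 ≤ l)
    (F₁ F₂ : ℂ → ℂ) (R ε : ℝ) (hε : 0 < ε) (hεR : 3 * ε < R)
    (hF₁ : AnalyticOnNhd ℂ F₁ (Metric.ball (1 : ℂ) R))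
    (hF₂ : AnalyticOnNhd ℂ F₂ (Metric.ball (1 : ℂ) R))
    (B : ℕ → ℂ → ℂ)
    (hBa : ∀ r ≤ l, AnalyticOnNhd ℂ (B r) (Metric.ball (1 : ℂ) R))
    (hB : ∀ r ≤ l, ∀ x ∈ Metric.ball (1 : ℂ) R,
      B r x * (x - 1) ^ r
        = x ^ l * F₂ x ^ (l - r)
          - ∑ i ∈ Finset.range r,
              (iteratedDeriv i (fun u : ℂ => u ^ l * F₂ u ^ (l - r)) 1 / (Nat.factorial i : ℂ))
                * (x - 1) ^ i) :
    (k : ℂ) * ∑ q ∈ Finset.range k, ∑ r ∈ Finset.range (l + 1),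
        (l.choose r : ℂ) * ((k - 1).choose q : ℂ) * (Nat.factorial (q + 1) : ℂ)⁻¹ *
          iteratedDeriv q (fun x : ℂ => x ^ k * F₁ x ^ (k - 1 - q) * deriv (B r) x) 1
      = ((2 * (π : ℂ) * Complex.I)⁻¹) ^ 2 *
          ∮ z in C(0, ε), ∮ w in C(0, 2 * ε),
            (z⁻¹ + 1 + (1 + z) * F₁ (1 + z)) ^ k *
              (w⁻¹ + 1 + (1 + w) * F₂ (1 + w)) ^ l * ((z - w) ^ 2)⁻¹ := by
  have hε2 : (0 : ℝ) < 2 * ε := by linarith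
  have hεR' : ε < R := by linarith
  have h2εR : 2 * ε < R := by linarith
  -- shorthand for Taylor coefficients
  set a : ℕ → ℕ → ℂ := fun r i =>
    iteratedDeriv i (fun u : ℂ => u ^ l * F₂ u ^ (l - r)) 1 / (Nat.factorial i : ℂ) with ha
  -- the shifted functions are continuous on the relevant spheres
  have hmapsW : ∀ w : ℂ, w ∈ sphere (0 : ℂ) (2 * ε) → (1 + w) ∈ ball (1 : ℂ) R := by
    intro w hw
    rw [mem_sphere_zero_iff_norm] at hw
    rw [mem_ball, dist_eq_norm, show (1 : ℂ) + w - 1 = w by ring, hw]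
    exact h2εR
  have hmapsZ : ∀ z : ℂ, z ∈ closedBall (0 : ℂ) ε → (1 + z) ∈ ball (1 : ℂ) R := by
    intro z hz
    rw [mem_closedBall, dist_zero_right] at hz
    rw [mem_ball, dist_eq_norm, show (1 : ℂ) + z - 1 = z by ring]
    exact lt_of_le_of_lt hz hεR'
  -- continuity of B r ∘ shift on the sphere of radius 2ε
  have hcontB : ∀ r, r ≤ l → ContinuousOn (fun w : ℂ => B r (1 + w)) (sphere (0 : ℂ) (2 * ε)) := by
    intro r hrl
    exact ((hBa r hrl).continuousOn).comp
      ((continuous_const.add continuous_id).continuousOn) hmapsW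
  ------------------------------------------------------------------
  -- STEP 1 : the inner integral
  ------------------------------------------------------------------
  have hinner : ∀ z ∈ sphere (0 : ℂ) ε,
      (∮ w in C(0, 2 * ε),
          (z⁻¹ + 1 + (1 + z) * F₁ (1 + z)) ^ k *
            (w⁻¹ + 1 + (1 + w) * F₂ (1 + w)) ^ l * ((z - w) ^ 2)⁻¹)
        = (z⁻¹ + 1 + (1 + z) * F₁ (1 + z)) ^ k *
            ((2 * (π : ℂ) * Complex.I) *
              ∑ r ∈ Finset.range (l + 1), (l.choose r : ℂ) * deriv (B r) (1 + z)) := by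
    intro z hz
    have hznorm : ‖z‖ = ε := mem_sphere_zero_iff_norm.mp hz
    have hz0 : z ≠ 0 := by
      intro h; rw [h] at hznorm; simp at hznorm; exact hε.ne' hznorm.symm
    have hzlt : ‖z‖ < 2 * ε := by rw [hznorm]; linarith
    have hzne : ‖z‖ ≠ 2 * ε := ne_of_lt hzlt
    have hzball : z ∈ ball (0 : ℂ) (2 * ε) := by
      simpa [mem_ball, dist_eq_norm] using hzlt
    simp only [mul_assoc]
    rw [circleIntegral.integral_const_mul]
    congr 1
    -- now evaluate  ∮ w, 𝔉₂(w)^l * ((z-w)^2)⁻¹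
    have hcongrw : Set.EqOn
        (fun w : ℂ => (w⁻¹ + 1 + (1 + w) * F₂ (1 + w)) ^ l * ((z - w) ^ 2)⁻¹)
        (fun w : ℂ => ∑ r ∈ Finset.range (l + 1),
          ((l.choose r : ℂ) * (B r (1 + w) * ((w - z) ^ 2)⁻¹)
            + (l.choose r : ℂ) * ∑ i ∈ Finset.range r,
                a r i * ((w ^ (r - i))⁻¹ * ((w - z) ^ 2)⁻¹)))
        (sphere (0 : ℂ) (2 * ε)) := by
      intro w hw
      have hw0 : w ≠ 0 := sphere_ne_zero hε2 hw
      have hsub : ((z - w) ^ 2)⁻¹ = ((w - z) ^ 2)⁻¹ := by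
        rw [show (z - w) ^ 2 = (w - z) ^ 2 by ring]
      dsimp only
      rw [binom_expand hw0, hsub, Finset.sum_mul]
      apply Finset.sum_congr rfl
      intro r hr
      have hrl : r ≤ l := Nat.lt_succ_iff.mp (Finset.mem_range.mp hr)
      -- rewrite using the defining property of B r
      have heq := hB r hrl (1 + w) (hmapsW w hw)
      simp only [add_sub_cancel_left] at heq
      have hwr : w ^ r ≠ 0 := pow_ne_zero _ hw0
      have hinv : (w ^ r)⁻¹ * w ^ r = 1 := inv_mul_cancel₀ hwr
      have hBr : (w ^ r)⁻¹ * ((1 + w) ^ l * F₂ (1 + w) ^ (l - r))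
          = B r (1 + w) + (w ^ r)⁻¹ * ∑ i ∈ Finset.range r, a r i * w ^ i := by
        linear_combination (-(w ^ r)⁻¹) * heq + B r (1 + w) * hinv
      have hsum2 : ∑ i ∈ Finset.range r, a r i * ((w ^ (r - i))⁻¹ * ((w - z) ^ 2)⁻¹)
          = ((w ^ r)⁻¹ * ∑ i ∈ Finset.range r, a r i * w ^ i) * ((w - z) ^ 2)⁻¹ := by
        rw [Finset.mul_sum, Finset.sum_mul]
        apply Finset.sum_congr rfl
        intro i hi
        have hir : i ≤ r := le_of_lt (Finset.mem_range.mp hi)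
        have hpow : (w ^ (r - i))⁻¹ = w ^ i * (w ^ r)⁻¹ := by
          rw [pow_sub₀ w hw0 hir, mul_inv, inv_inv]
          exact mul_comm _ _
        rw [hpow]
        ring
      rw [hsum2]
      linear_combination ((l.choose r : ℂ) * ((w - z) ^ 2)⁻¹) * hBr
    rw [circleIntegral.integral_congr hε2.le hcongrw]
    -- integrability of the pieces
    have hciB : ∀ r, r ≤ l →
        CircleIntegrable (fun w : ℂ => (l.choose r : ℂ) * (B r (1 + w) * ((w - z) ^ 2)⁻¹))
          0 (2 * ε) := by
      intro r hrl
      exact ContinuousOn.circleIntegrable hε2.le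
        (continuousOn_const.mul ((hcontB r hrl).mul (contOn_inv_sub_pow hzne 2)))
    have hciS : ∀ r, CircleIntegrable
        (fun w : ℂ => (l.choose r : ℂ) * ∑ i ∈ Finset.range r,
            a r i * ((w ^ (r - i))⁻¹ * ((w - z) ^ 2)⁻¹)) 0 (2 * ε) := by
      intro r
      apply ContinuousOn.circleIntegrable hε2.le
      apply continuousOn_const.mul
      apply continuousOn_finset_sum
      intro i _
      exact continuousOn_const.mul ((contOn_inv_pow hε2 (r - i)).mul
        (contOn_inv_sub_pow hzne 2))
    rw [circleIntegral_sum (Finset.range (l + 1))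
      (f := fun r w => (l.choose r : ℂ) * (B r (1 + w) * ((w - z) ^ 2)⁻¹)
        + (l.choose r : ℂ) * ∑ i ∈ Finset.range r,
            a r i * ((w ^ (r - i))⁻¹ * ((w - z) ^ 2)⁻¹))
      (fun r hr => (hciB r (Nat.lt_succ_iff.mp (Finset.mem_range.mp hr))).add (hciS r))]
    -- evaluate each integral
    have heval : ∀ r ∈ Finset.range (l + 1),
        (∮ w in C(0, 2 * ε),
            ((l.choose r : ℂ) * (B r (1 + w) * ((w - z) ^ 2)⁻¹)
              + (l.choose r : ℂ) * ∑ i ∈ Finset.range r,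
                  a r i * ((w ^ (r - i))⁻¹ * ((w - z) ^ 2)⁻¹)))
          = (2 * (π : ℂ) * Complex.I) * ((l.choose r : ℂ) * deriv (B r) (1 + z)) := by
      intro r hr
      have hrl : r ≤ l := Nat.lt_succ_iff.mp (Finset.mem_range.mp hr)
      rw [circleIntegral_add' (hciB r hrl) (hciS r),
        circleIntegral.integral_const_mul, circleIntegral.integral_const_mul]
      -- Cauchy derivative formula for the analytic part
      have hdiffB : DifferentiableOn ℂ (fun w : ℂ => B r (1 + w)) (ball (0 : ℂ) R) := by
        intro w hw
        have h1w : (1 + w) ∈ ball (1 : ℂ) R := by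
          rw [mem_ball, dist_zero_right] at hw
          rw [mem_ball, dist_eq_norm, show (1 : ℂ) + w - 1 = w by ring]
          exact hw
        exact (((hBa r hrl) _ h1w).differentiableAt.comp w
          (differentiableAt_id.const_add 1)).differentiableWithinAt
      have hclos : closedBall (0 : ℂ) (2 * ε) ⊆ ball (0 : ℂ) R :=
        closedBall_subset_ball h2εR
      have hcd := Complex.two_pi_I_inv_smul_circleIntegral_sub_sq_inv_smul_of_differentiable
        isOpen_ball hclos hdiffB hzball
      have hcd2 : (∮ w in C(0, 2 * ε), B r (1 + w) * ((w - z) ^ 2)⁻¹)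
          = (2 * (π : ℂ) * Complex.I) * deriv (B r) (1 + z) := by
        have hflip : (∮ w in C(0, 2 * ε), B r (1 + w) * ((w - z) ^ 2)⁻¹)
            = ∮ w in C(0, 2 * ε), ((w - z) ^ 2)⁻¹ • B r (1 + w) := by
          apply circleIntegral.integral_congr hε2.le
          intro w _
          dsimp only
          rw [smul_eq_mul, mul_comm]
        rw [hflip, ← deriv_comp_const_add (B r) 1 z, ← hcd, smul_eq_mul, ← mul_assoc,
          mul_inv_cancel₀ two_pi_I_ne, one_mul]
      -- the principal parts integrate to zero
      have hzero : (∮ w in C(0, 2 * ε), ∑ i ∈ Finset.range r,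
          a r i * ((w ^ (r - i))⁻¹ * ((w - z) ^ 2)⁻¹)) = 0 := by
        rw [circleIntegral_sum (Finset.range r)
          (f := fun i w => a r i * ((w ^ (r - i))⁻¹ * ((w - z) ^ 2)⁻¹)) (fun i _ =>
          ContinuousOn.circleIntegrable hε2.le (continuousOn_const.mul
            ((contOn_inv_pow hε2 (r - i)).mul (contOn_inv_sub_pow hzne 2))))]
        apply Finset.sum_eq_zero
        intro i _
        rw [circleIntegral.integral_const_mul,
          integral_inv_pow_mul_sub_sq_inv hz0 hzlt (r - i), mul_zero]
      rw [hcd2, hzero, mul_zero, add_zero]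
      ring
    rw [Finset.sum_congr rfl heval]
    simp only [Finset.mul_sum]
    apply Finset.sum_congr rfl
    intro r _
    ring
  ------------------------------------------------------------------
  -- STEP 2 : the outer integral
  ------------------------------------------------------------------
  -- differentiability of the outer integrands
  have hdiff : ∀ j r, r ≤ l → DifferentiableOn ℂ
      (fun z : ℂ => (1 + z) ^ k * F₁ (1 + z) ^ (k - j) * deriv (B r) (1 + z))
      (closedBall (0 : ℂ) ε) := by
    intro j r hrl z hz
    have h1z : (1 + z) ∈ ball (1 : ℂ) R := hmapsZ z hz
    have d1 : DifferentiableAt ℂ (fun z : ℂ => (1 + z) ^ k) z :=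
      (differentiableAt_id.const_add 1).pow k
    have d2 : DifferentiableAt ℂ (fun z : ℂ => F₁ (1 + z) ^ (k - j)) z :=
      (((hF₁ _ h1z).differentiableAt.comp z (differentiableAt_id.const_add 1)).pow (k - j))
    have d3 : DifferentiableAt ℂ (fun z : ℂ => deriv (B r) (1 + z)) z :=
      (((hBa r hrl).deriv _ h1z).differentiableAt.comp z (differentiableAt_id.const_add 1))
    exact ((d1.mul d2).mul d3).differentiableWithinAt
  -- rewrite the outer integral using hinner
  rw [circleIntegral.integral_congr hε.le hinner]
  -- expand 𝔉₁^k and integrate term by term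
  have hcongrz : Set.EqOn
      (fun z : ℂ => (z⁻¹ + 1 + (1 + z) * F₁ (1 + z)) ^ k *
          ((2 * (π : ℂ) * Complex.I) *
            ∑ r ∈ Finset.range (l + 1), (l.choose r : ℂ) * deriv (B r) (1 + z)))
      (fun z : ℂ => ∑ j ∈ Finset.range (k + 1), ∑ r ∈ Finset.range (l + 1),
          ((2 * (π : ℂ) * Complex.I) * (k.choose j : ℂ) * (l.choose r : ℂ)) *
            ((z ^ j)⁻¹ * ((1 + z) ^ k * F₁ (1 + z) ^ (k - j) * deriv (B r) (1 + z))))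
      (sphere (0 : ℂ) ε) := by
    intro z hz
    have hznorm : ‖z‖ = ε := mem_sphere_zero_iff_norm.mp hz
    have hz0 : z ≠ 0 := by
      intro h; rw [h] at hznorm; simp at hznorm; exact hε.ne' hznorm.symm
    dsimp only
    rw [binom_expand hz0, Finset.sum_mul]
    apply Finset.sum_congr rfl
    intro j _
    simp only [Finset.mul_sum]
    apply Finset.sum_congr rfl
    intro r _
    ring
  rw [circleIntegral.integral_congr hε.le hcongrz]
  -- integrability on the sphere of radius ε
  have hciOut : ∀ j r, r ≤ l → CircleIntegrable
      (fun z : ℂ => ((2 * (π : ℂ) * Complex.I) * (k.choose j : ℂ) * (l.choose r : ℂ)) *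
        ((z ^ j)⁻¹ * ((1 + z) ^ k * F₁ (1 + z) ^ (k - j) * deriv (B r) (1 + z)))) 0 ε := by
    intro j r hrl
    apply ContinuousOn.circleIntegrable hε.le
    exact continuousOn_const.mul ((contOn_inv_pow hε j).mul
      (((hdiff j r hrl).continuousOn).mono sphere_subset_closedBall))
  rw [circleIntegral_sum (Finset.range (k + 1)) (fun j _ =>
    circleIntegrable_sum (Finset.range (l + 1)) (fun r hr =>
      hciOut j r (Nat.lt_succ_iff.mp (Finset.mem_range.mp hr))))]
  have hsplit : ∀ j ∈ Finset.range (k + 1),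
      (∮ z in C(0, ε), ∑ r ∈ Finset.range (l + 1),
          ((2 * (π : ℂ) * Complex.I) * (k.choose j : ℂ) * (l.choose r : ℂ)) *
            ((z ^ j)⁻¹ * ((1 + z) ^ k * F₁ (1 + z) ^ (k - j) * deriv (B r) (1 + z))))
        = ∑ r ∈ Finset.range (l + 1),
            ((2 * (π : ℂ) * Complex.I) * (k.choose j : ℂ) * (l.choose r : ℂ)) *
              ∮ z in C(0, ε),
                (z ^ j)⁻¹ * ((1 + z) ^ k * F₁ (1 + z) ^ (k - j) * deriv (B r) (1 + z)) := by
    intro j _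
    rw [circleIntegral_sum (Finset.range (l + 1)) (fun r hr =>
      hciOut j r (Nat.lt_succ_iff.mp (Finset.mem_range.mp hr)))]
    apply Finset.sum_congr rfl
    intro r _
    rw [circleIntegral.integral_const_mul]
  rw [Finset.sum_congr rfl hsplit]
  -- evaluate the integrals : j = 0 gives zero, j = q+1 gives Cauchy coefficients
  rw [Finset.sum_range_succ']
  have hzeroterm : ∑ r ∈ Finset.range (l + 1),
      ((2 * (π : ℂ) * Complex.I) * (k.choose 0 : ℂ) * (l.choose r : ℂ)) *
        (∮ z in C(0, ε),
          (z ^ 0)⁻¹ * ((1 + z) ^ k * F₁ (1 + z) ^ (k - 0) * deriv (B r) (1 + z))) = 0 := by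
    apply Finset.sum_eq_zero
    intro r hr
    have hrl : r ≤ l := Nat.lt_succ_iff.mp (Finset.mem_range.mp hr)
    have : (∮ z in C(0, ε),
        (z ^ 0)⁻¹ * ((1 + z) ^ k * F₁ (1 + z) ^ (k - 0) * deriv (B r) (1 + z)))
        = ∮ z in C(0, ε), (1 + z) ^ k * F₁ (1 + z) ^ (k - 0) * deriv (B r) (1 + z) := by
      apply circleIntegral.integral_congr hε.le
      intro z _
      dsimp only
      rw [pow_zero, inv_one, one_mul]
    rw [this, cauchy_zero hε (hdiff 0 r hrl), mul_zero]
  rw [hzeroterm, add_zero]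
  have hevalq : ∀ q ∈ Finset.range k,
      (∑ r ∈ Finset.range (l + 1),
        ((2 * (π : ℂ) * Complex.I) * (k.choose (q + 1) : ℂ) * (l.choose r : ℂ)) *
          (∮ z in C(0, ε),
            (z ^ (q + 1))⁻¹ *
              ((1 + z) ^ k * F₁ (1 + z) ^ (k - (q + 1)) * deriv (B r) (1 + z))))
        = ∑ r ∈ Finset.range (l + 1),
            ((2 * (π : ℂ) * Complex.I) ^ 2 * (k.choose (q + 1) : ℂ) * (l.choose r : ℂ) *
              ((Nat.factorial q : ℂ))⁻¹) *
              iteratedDeriv q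
                (fun x : ℂ => x ^ k * F₁ x ^ (k - 1 - q) * deriv (B r) x) 1 := by
    intro q _
    apply Finset.sum_congr rfl
    intro r hr
    have hrl : r ≤ l := Nat.lt_succ_iff.mp (Finset.mem_range.mp hr)
    have hexp : k - (q + 1) = k - 1 - q := by omega
    have hcc := cauchy_coeff hε (hdiff (q + 1) r hrl) q
    have hshift : iteratedDeriv q
        (fun z : ℂ => (1 + z) ^ k * F₁ (1 + z) ^ (k - (q + 1)) * deriv (B r) (1 + z)) 0
        = iteratedDeriv q
            (fun x : ℂ => x ^ k * F₁ x ^ (k - 1 - q) * deriv (B r) x) 1 := by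
      rw [hexp]
      have := congrFun (iteratedDeriv_comp_const_add q
        (fun x : ℂ => x ^ k * F₁ x ^ (k - 1 - q) * deriv (B r) x) 1) 0
      rw [add_zero] at this
      exact this
    rw [hcc, hshift]
    ring
  rw [Finset.sum_congr rfl hevalq]
  -- final bookkeeping
  rw [Finset.mul_sum]
  rw [Finset.mul_sum]
  apply Eq.symm
  apply Finset.sum_congr rfl
  intro q _
  rw [Finset.mul_sum, Finset.mul_sum]
  apply Finset.sum_congr rfl
  intro r _
  have hcomb := comb_identity (q := q) hk
  have h2 : ((2 * (π : ℂ) * Complex.I)⁻¹) ^ 2 * (2 * (π : ℂ) * Complex.I) ^ 2 = 1 := by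
    rw [← mul_pow, inv_mul_cancel₀ two_pi_I_ne, one_pow]
  calc ((2 * (π : ℂ) * Complex.I)⁻¹) ^ 2 *
        (((2 * (π : ℂ) * Complex.I) ^ 2 * (k.choose (q + 1) : ℂ) * (l.choose r : ℂ) *
          ((Nat.factorial q : ℂ))⁻¹) *
          iteratedDeriv q (fun x : ℂ => x ^ k * F₁ x ^ (k - 1 - q) * deriv (B r) x) 1)
      = (((2 * (π : ℂ) * Complex.I)⁻¹) ^ 2 * (2 * (π : ℂ) * Complex.I) ^ 2) *
          ((k.choose (q + 1) : ℂ) * ((Nat.factorial q : ℂ))⁻¹ * (l.choose r : ℂ) *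
          iteratedDeriv q (fun x : ℂ => x ^ k * F₁ x ^ (k - 1 - q) * deriv (B r) x) 1) := by
        ring
    _ = ((k.choose (q + 1) : ℂ) * ((Nat.factorial q : ℂ))⁻¹) * (l.choose r : ℂ) *
          iteratedDeriv q (fun x : ℂ => x ^ k * F₁ x ^ (k - 1 - q) * deriv (B r) x) 1 := by
        rw [h2]; ring
    _ = (k : ℂ) * ((l.choose r : ℂ) * ((k - 1).choose q : ℂ) *
          (Nat.factorial (q + 1) : ℂ)⁻¹ *
          iteratedDeriv q (fun x : ℂ => x ^ k * F₁ x ^ (k - 1 - q) * deriv (B r) x) 1) := by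
        rw [← hcomb]; ring
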